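/- Let θ, θ* ∈ ℝ^d and x₁,...,xₜ ∈ ℝ^d with D := max_s |x_s^T(θ − θ*)| ≤ 1. Define H(θ) = Σ_s μ'(x_s^T θ) x_s x_s^T where μ is the logistic function. Then (1/(2D+1))·H(θ*) ⪯ H(θ) ⪯ (2D+1)·H(θ*) in the Loewner order. -/

import Mathlib

open Matrix

noncomputable def logistic (z : ℝ) : ℝ := 1 / (1 + Real.exp (-z))

noncomputable def fisherH (d t : ℕ) (x : Fin t → Fin d → ℝ) (θ : Fin d → ℝ) :
    Matrix (Fin d) (Fin d) ℝ :=
  ∑ s, deriv logistic (x s ⬝ᵥ θ) • vecMulVec (x s) (x s)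

/-! Since `μ'(z) = 1 / (2 + eᶻ + e⁻ᶻ)`, shifting the argument by `Δ` changes `μ'` by a factor
at most `e^|Δ|`, and `e^|Δ| ≤ 2|Δ| + 1` for `|Δ| ≤ 1` by convexity of `exp` and `e < 3`.
Both differences of Hessians are then sums of rank-one matrices `x xᵀ` with nonnegative
weights. -/

open Real

lemma logistic_eq_sigmoid : logistic = sigmoid := by
  funext z
  rw [logistic, sigmoid_def, one_div]

lemma deriv_logistic (z : ℝ) : deriv logistic z = (2 + exp z + exp (-z))⁻¹ := by
  rw [logistic_eq_sigmoid, deriv_sigmoid]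
  beta_reduce
  rw [← sigmoid_neg, sigmoid_def, sigmoid_def, neg_neg, ← mul_inv]
  congr 1
  rw [mul_add, add_mul, add_mul, ← exp_add, neg_add_cancel, exp_zero]
  ring

lemma deriv_logistic_le_exp_abs_sub_mul (a b : ℝ) :
    deriv logistic a ≤ exp |a - b| * deriv logistic b := by
  have hb : b ≤ |a - b| + a := by linarith [neg_abs_le (a - b)]
  have hb' : -b ≤ |a - b| + -a := by linarith [le_abs_self (a - b)]
  have hterms : 2 + exp b + exp (-b) ≤ exp |a - b| * (2 + exp a + exp (-a)) := by
    have h1 : 1 ≤ exp |a - b| := one_le_exp (abs_nonneg _)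
    have h2 := exp_le_exp.mpr hb
    have h3 := exp_le_exp.mpr hb'
    rw [exp_add] at h2 h3
    linarith
  rw [deriv_logistic, deriv_logistic, ← div_eq_mul_inv, le_div_iff₀ (by positivity),
    inv_mul_le_iff₀ (by positivity), mul_comm]
  exact hterms

lemma exp_le_two_mul_add_one {x : ℝ} (h0 : 0 ≤ x) (h1 : x ≤ 1) : exp x ≤ 2 * x + 1 := by
  have hconv := convexOn_exp.2 (Set.mem_univ 0) (Set.mem_univ 1) (sub_nonneg.2 h1) h0
    (sub_add_cancel 1 x)
  simp only [smul_eq_mul, mul_zero, mul_one, zero_add, exp_zero] at hconv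
  nlinarith [exp_one_lt_three]

lemma deriv_logistic_le_of_abs_sub_le {a b D : ℝ} (hab : |a - b| ≤ D) (hD : D ≤ 1) :
    deriv logistic a ≤ (2 * D + 1) * deriv logistic b :=
  calc deriv logistic a ≤ exp |a - b| * deriv logistic b := deriv_logistic_le_exp_abs_sub_mul a b
    _ ≤ (2 * D + 1) * deriv logistic b := by
      gcongr
      · rw [deriv_logistic]; positivity
      · exact (exp_le_two_mul_add_one (abs_nonneg _) (hab.trans hD)).trans (by linarith)

lemma posSemidef_sum_smul_vecMulVec_self {ι n : Type*} [Fintype ι] [Finite n] {w : ι → ℝ}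
    (hw : ∀ i, 0 ≤ w i) (v : ι → n → ℝ) :
    (∑ i, w i • vecMulVec (v i) (v i)).PosSemidef :=
  posSemidef_sum _ fun i _ => (posSemidef_vecMulVec_self_star (v i)).smul (hw i)

lemma smul_fisherH_sub_smul_fisherH (d t : ℕ) (x : Fin t → Fin d → ℝ) (θ θ' : Fin d → ℝ)
    (a c : ℝ) :
    a • fisherH d t x θ - c • fisherH d t x θ' =
      ∑ s, (a * deriv logistic (x s ⬝ᵥ θ) - c * deriv logistic (x s ⬝ᵥ θ')) •
        vecMulVec (x s) (x s) := by
  simp only [fisherH, Finset.smul_sum, smul_smul, sub_smul, Finset.sum_sub_distrib]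

lemma posSemidef_smul_fisherH_sub_smul_fisherH {d t : ℕ} {x : Fin t → Fin d → ℝ}
    {θ θ' : Fin d → ℝ} {a c : ℝ}
    (h : ∀ s, c * deriv logistic (x s ⬝ᵥ θ') ≤ a * deriv logistic (x s ⬝ᵥ θ)) :
    (a • fisherH d t x θ - c • fisherH d t x θ').PosSemidef := by
  rw [smul_fisherH_sub_smul_fisherH]
  exact posSemidef_sum_smul_vecMulVec_self (fun s => sub_nonneg.2 (h s)) x

theorem stmt_13 (d t : ℕ) (x : Fin t → Fin d → ℝ) (θ θstar : Fin d → ℝ) (D : ℝ)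
    (hD0 : 0 ≤ D) (hD1 : D ≤ 1)
    (hmax : ∀ s, |x s ⬝ᵥ (θ - θstar)| ≤ D) :
    (fisherH d t x θ - (2 * D + 1)⁻¹ • fisherH d t x θstar).PosSemidef ∧
    ((2 * D + 1) • fisherH d t x θstar - fisherH d t x θ).PosSemidef := by
  have hdiff : ∀ s, |x s ⬝ᵥ θ - x s ⬝ᵥ θstar| ≤ D := fun s =>
    dotProduct_sub (x s) θ θstar ▸ hmax s
  constructor
  · refine one_smul ℝ (fisherH d t x θ) ▸ posSemidef_smul_fisherH_sub_smul_fisherH fun s => ?_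
    have h := deriv_logistic_le_of_abs_sub_le (abs_sub_comm (x s ⬝ᵥ θ) _ ▸ hdiff s) hD1
    rwa [one_mul, inv_mul_le_iff₀ (by linarith)]
  · refine one_smul ℝ (fisherH d t x θ) ▸ posSemidef_smul_fisherH_sub_smul_fisherH fun s => ?_
    rw [one_mul]
    exact deriv_logistic_le_of_abs_sub_le (hdiff s) hD1
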